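/- arXiv:2204.06320 — 2 statements merged into one kernel-verified Lean document; each statement's English description precedes it below -/
import Mathlib

section
/- Let A be a division ring and let p, q, r, s be nonzero elements of A such that the four elements d11 = p - q * s⁻¹ * r, d12 = r - s * q⁻¹ * p, d21 = q - p * r⁻¹ * s, d22 = s - r * p⁻¹ * q are all nonzero. Then the 2×2 matrix M = !![p, q; r, s] over A is invertible, and its inverse is the matrix N = !![d11⁻¹, d12⁻¹; d21⁻¹, d22⁻¹]; that is, M * N = 1 and N * M = 1. -/
theorem quasideterminant_inverse_2x2 {A : Type*} [DivisionRing A]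
    (p q r s : A) (hp : p ≠ 0) (hq : q ≠ 0) (hr : r ≠ 0) (hs : s ≠ 0)
    (h11 : p - q * s⁻¹ * r ≠ 0) (h12 : r - s * q⁻¹ * p ≠ 0)
    (h21 : q - p * r⁻¹ * s ≠ 0) (h22 : s - r * p⁻¹ * q ≠ 0) :
    (!![p, q; r, s] : Matrix (Fin 2) (Fin 2) A) *
        !![(p - q * s⁻¹ * r)⁻¹, (r - s * q⁻¹ * p)⁻¹;
           (q - p * r⁻¹ * s)⁻¹, (s - r * p⁻¹ * q)⁻¹] = 1 ∧
    (!![(p - q * s⁻¹ * r)⁻¹, (r - s * q⁻¹ * p)⁻¹;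
        (q - p * r⁻¹ * s)⁻¹, (s - r * p⁻¹ * q)⁻¹] : Matrix (Fin 2) (Fin 2) A) *
        !![p, q; r, s] = 1 := by
  set x := p - q * s⁻¹ * r with hxdef
  set z := r - s * q⁻¹ * p with hzdef
  set y := q - p * r⁻¹ * s with hydef
  set w := s - r * p⁻¹ * q with hwdef
  -- factorizations
  have hx : x = -(y * s⁻¹ * r) := by
    rw [hxdef, hydef]
    simp [sub_mul, mul_assoc, inv_mul_cancel_left₀, mul_inv_cancel_left₀, hs, hr, neg_sub]
  have hz1 : z = -(w * q⁻¹ * p) := by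
    rw [hzdef, hwdef]
    simp [sub_mul, mul_assoc, inv_mul_cancel_left₀, mul_inv_cancel_left₀, hp, hq, neg_sub]
  have hz2 : z = -(s * q⁻¹ * x) := by
    rw [hzdef, hxdef]
    simp [mul_sub, mul_assoc, inv_mul_cancel_left₀, mul_inv_cancel_left₀, hs, hq, neg_sub]
  have hw : w = -(r * p⁻¹ * y) := by
    rw [hwdef, hydef]
    simp [mul_sub, mul_assoc, inv_mul_cancel_left₀, mul_inv_cancel_left₀, hp, hr, neg_sub]
  -- inverse relations
  have hxi : x⁻¹ = -(r⁻¹ * s * y⁻¹) := by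
    rw [hx]; simp [inv_neg, mul_inv_rev, mul_assoc]
  have hzi1 : z⁻¹ = -(p⁻¹ * q * w⁻¹) := by
    rw [hz1]; simp [inv_neg, mul_inv_rev, mul_assoc]
  have hzi2 : z⁻¹ = -(x⁻¹ * q * s⁻¹) := by
    rw [hz2]; simp [inv_neg, mul_inv_rev, mul_assoc]
  have hwi : w⁻¹ = -(y⁻¹ * p * r⁻¹) := by
    rw [hw]; simp [inv_neg, mul_inv_rev, mul_assoc]
  have e1 : p * x⁻¹ + q * y⁻¹ = 1 := by
    rw [hxi, show p * -(r⁻¹ * s * y⁻¹) + q * y⁻¹ = (q - p * r⁻¹ * s) * y⁻¹ by noncomm_ring,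
      ← hydef, mul_inv_cancel₀ h21]
  have e2 : p * z⁻¹ + q * w⁻¹ = 0 := by
    rw [hzi1, show p * -(p⁻¹ * q * w⁻¹) + q * w⁻¹ = (q - p * p⁻¹ * q) * w⁻¹ by noncomm_ring,
      mul_inv_cancel₀ hp]
    simp
  have e3 : r * x⁻¹ + s * y⁻¹ = 0 := by
    rw [hxi, show r * -(r⁻¹ * s * y⁻¹) + s * y⁻¹ = (s - r * r⁻¹ * s) * y⁻¹ by noncomm_ring,
      mul_inv_cancel₀ hr]
    simp
  have e4 : r * z⁻¹ + s * w⁻¹ = 1 := by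
    rw [hzi1, show r * -(p⁻¹ * q * w⁻¹) + s * w⁻¹ = (s - r * p⁻¹ * q) * w⁻¹ by noncomm_ring,
      ← hwdef, mul_inv_cancel₀ h22]
  have f1 : x⁻¹ * p + z⁻¹ * r = 1 := by
    rw [hzi2, show x⁻¹ * p + -(x⁻¹ * q * s⁻¹) * r = x⁻¹ * (p - q * s⁻¹ * r) by noncomm_ring,
      ← hxdef, inv_mul_cancel₀ h11]
  have f2 : x⁻¹ * q + z⁻¹ * s = 0 := by
    rw [hzi2, show x⁻¹ * q + -(x⁻¹ * q * s⁻¹) * s = x⁻¹ * (q - q * (s⁻¹ * s)) by noncomm_ring,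
      inv_mul_cancel₀ hs]
    simp
  have f3 : y⁻¹ * p + w⁻¹ * r = 0 := by
    rw [hwi, show y⁻¹ * p + -(y⁻¹ * p * r⁻¹) * r = y⁻¹ * (p - p * (r⁻¹ * r)) by noncomm_ring,
      inv_mul_cancel₀ hr]
    simp
  have f4 : y⁻¹ * q + w⁻¹ * s = 1 := by
    rw [hwi, show y⁻¹ * q + -(y⁻¹ * p * r⁻¹) * s = y⁻¹ * (q - p * r⁻¹ * s) by noncomm_ring,
      ← hydef, inv_mul_cancel₀ h21]
  constructor
  · rw [Matrix.mul_fin_two, Matrix.one_fin_two, e1, e2, e3, e4]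
  · rw [Matrix.mul_fin_two, Matrix.one_fin_two, f1, f2, f3, f4]
end

section
/- Let A be a complete normed division ring that is a normed ℝ-algebra, n a finite type, a : Matrix n n A, b ∈ A, and c : n → A. Assume there are p ∈ A with p ≠ 0 and c' : n → A such that c i = p * c' i for every i, every c' i commutes with b, and c is an eigencolumn for the eigenvalue b in the sense that ∑ j, c j * a j i = c i * b for every i. Define x i t = c i * exp(t • b) for t : ℝ. Then for every index i and every t : ℝ, the function t ↦ x i t has derivative ∑ j, (x j t) * a j i at t; i.e., x solves the homogeneous linear system dxⁱ/dt = ∑ⱼ xʲ aⱼⁱ. -/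
theorem exp_eigencolumn_solves_system' {A : Type*} [NormedDivisionRing A]
    [NormedAlgebra ℝ A] [CompleteSpace A]
    {n : Type*} [Fintype n] (a : Matrix n n A) (b : A) (c : n → A)
    (p : A) (hp : p ≠ 0) (c' : n → A)
    (hpc : ∀ i, c i = p * c' i)
    (hcomm : ∀ i, c' i * b = b * c' i)
    (hc : ∀ i, ∑ j, c j * a j i = c i * b) :
    ∀ (i : n) (t : ℝ),
      HasDerivAt (fun t : ℝ => c i * NormedSpace.exp (t • b))
        (∑ j, (c j * NormedSpace.exp (t • b)) * a j i) t := by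
  intro i t
  have hcomm' : ∀ j, Commute (c' j) (NormedSpace.exp (t • b)) := fun j =>
    by
    have h : Commute (c' j) b := hcomm j
    exact (h.smul_right t).exp_right
  have key : ∑ j, (c j * NormedSpace.exp (t • b)) * a j i
      = c i * (NormedSpace.exp (t • b) * b) := by
    have hc' : ∑ j, c' j * a j i = c' i * b := by
      have := hc i
      simp only [hpc, mul_assoc, ← Finset.mul_sum] at this
      exact mul_left_cancel₀ hp this
    calc ∑ j, (c j * NormedSpace.exp (t • b)) * a j i
        = ∑ j, p * (NormedSpace.exp (t • b) * (c' j * a j i)) := by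
          refine Finset.sum_congr rfl fun j _ => ?_
          rw [hpc j]
          simp only [mul_assoc]
          rw [← mul_assoc (c' j), (hcomm' j).eq, mul_assoc]
      _ = p * (NormedSpace.exp (t • b) * (c' i * b)) := by
          rw [← Finset.mul_sum, ← Finset.mul_sum, hc']
      _ = c i * (NormedSpace.exp (t • b) * b) := by
          conv_rhs => rw [hpc i]
          simp only [mul_assoc]
          rw [← mul_assoc (c' i), (hcomm' i).eq, mul_assoc]
  rw [key]
  exact (hasDerivAt_exp_smul_const b t).const_mul (c i)
end
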